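/- arXiv:2203.10589 — 2 statements merged into one kernel-verified Lean document; each statement's English description precedes it below -/
import Mathlib

section
/- Let Q (2n,k) be the number of symmetric partial matchings on 2n points with no arc between adjacent points (crossings allowed, symmetry under i ↦ 2n+1-i) having exactly k free points. Then Q (2,0)=0, Q (2,2)=1, Q (4,0)=Q (4,2)=Q (4,4)=1, and for n ≥ 3 and k even: Q (2n,k) = (k+2)·Q (2n-2,k+2) + Q (2n-2,k) + Q (2n-2,k-2) - Q (2n-4,k), with Q (2n,k) = 0 if k < 0 or k > 2n. -/
/-- A partial matching on `n` linearly ordered points (0-indexed), given as a finite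
set of arcs `(i,j)` with `i + 2 ≤ j` (so no arc connects two adjacent points),
with all arc endpoints pairwise distinct. -/
def IsMatching (n : ℕ) (M : Finset (Fin n × Fin n)) : Prop :=
  (∀ p ∈ M, p.1.val + 2 ≤ p.2.val) ∧
  ∀ p ∈ M, ∀ q ∈ M, p ≠ q →
    p.1 ≠ q.1 ∧ p.1 ≠ q.2 ∧ p.2 ≠ q.1 ∧ p.2 ≠ q.2

/-- No two arcs cross. -/
def Noncrossing (n : ℕ) (M : Finset (Fin n × Fin n)) : Prop :=
  ∀ p ∈ M, ∀ q ∈ M, ¬(p.1 < q.1 ∧ q.1 < p.2 ∧ p.2 < q.2)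

/-- The matching is invariant under the reflection `i ↦ n+1-i` (here `Fin.rev`). -/
def SymmMatching (n : ℕ) (M : Finset (Fin n × Fin n)) : Prop :=
  ∀ p ∈ M, (p.2.rev, p.1.rev) ∈ M

/-- The number of symmetric partial matchings (crossings allowed) on `n` points
with no arc between adjacent points and exactly `k` free points. -/
noncomputable def Q (n k : ℕ) : ℕ :=
  Nat.card {M : Finset (Fin n × Fin n) //
    IsMatching n M ∧ SymmMatching n M ∧ n = 2 * M.card + k}

open Finset

namespace St8

instance (n M) : Decidable (IsMatching n M) := by unfold IsMatching; infer_instance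
instance (n M) : Decidable (SymmMatching n M) := by unfold SymmMatching; infer_instance

def Free {n : ℕ} (M : Finset (Fin n × Fin n)) (x : Fin n) : Prop :=
  ∀ p ∈ M, x ≠ p.1 ∧ x ≠ p.2

instance {n M x} : Decidable (Free (n := n) M x) := by unfold Free; infer_instance

def F (n k : ℕ) : Finset (Finset (Fin n × Fin n)) :=
  univ.filter (fun M => IsMatching n M ∧ SymmMatching n M ∧ n = 2 * M.card + k)

lemma mem_F {n k : ℕ} {M : Finset (Fin n × Fin n)} :
    M ∈ F n k ↔ IsMatching n M ∧ SymmMatching n M ∧ n = 2 * M.card + k := by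
  simp [F]

lemma Q_eq (n k : ℕ) : Q n k = (F n k).card := by
  rw [Q, Nat.card_eq_fintype_card, F, Fintype.card_subtype]

lemma free_rev {n : ℕ} {M : Finset (Fin n × Fin n)} (hs : SymmMatching n M)
    {x : Fin n} (hx : Free M x) : Free M x.rev := by
  intro p hp
  have h2 := hx _ (hs p hp)
  constructor
  · intro h; exact h2.2 (by simp [← h])
  · intro h; exact h2.1 (by simp [← h])

lemma card_free {n k : ℕ} {M : Finset (Fin n × Fin n)} (hM : M ∈ F n k) :
    (univ.filter (fun x => Free M x)).card = k := by
  obtain ⟨⟨hgap, hdisj⟩, _, hcard⟩ := mem_F.mp hM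
  have key : (univ.filter (fun x => ¬ Free M x)).card = 2 * M.card := by
    have he : (univ.filter (fun x => ¬ Free M x))
        = (M.image Prod.fst) ∪ (M.image Prod.snd) := by
      ext x
      simp only [mem_filter, mem_univ, true_and, Free, mem_union, mem_image, not_forall]
      constructor
      · rintro ⟨p, hp, h⟩
        rcases not_and_or.mp h with h | h
        · exact Or.inl ⟨p, hp, (not_not.mp h).symm⟩
        · exact Or.inr ⟨p, hp, (not_not.mp h).symm⟩
      · rintro (⟨p, hp, h⟩ | ⟨p, hp, h⟩) <;> exact ⟨p, hp, by simp [← h]⟩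
    have h1 : (M.image Prod.fst).card = M.card := by
      apply card_image_of_injOn
      intro p hp q hq h
      by_contra hne
      exact (hdisj p hp q hq hne).1 h
    have h2 : (M.image Prod.snd).card = M.card := by
      apply card_image_of_injOn
      intro p hp q hq h
      by_contra hne
      exact (hdisj p hp q hq hne).2.2.2 h
    have hd : Disjoint (M.image Prod.fst) (M.image Prod.snd) := by
      rw [disjoint_left]
      rintro x hx1 hx2
      obtain ⟨p, hp, hp1⟩ := mem_image.mp hx1
      obtain ⟨q, hq, hq1⟩ := mem_image.mp hx2
      rcases eq_or_ne p q with rfl | hne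
      · have h := hgap p hp
        have : p.1 = p.2 := hp1.trans hq1.symm
        rw [this] at h; omega
      · exact (hdisj p hp q hq hne).2.1 (hp1.trans hq1.symm)
    rw [he, card_union_of_disjoint hd, h1, h2]
    ring
  have := card_filter_add_card_filter_not
    (s := (univ : Finset (Fin n))) (p := fun x => Free M x)
  simp only [card_univ, Fintype.card_fin] at this
  rw [key] at this
  omega

def gr {n : ℕ} : Fin n → Fin (n + 2) := fun i => ⟨i.val + 1, by omega⟩

lemma gr_val {n : ℕ} (i : Fin n) : (gr i).val = i.val + 1 := rfl

lemma gr_inj {n : ℕ} : Function.Injective (gr (n := n)) := by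
  intro a b h
  apply Fin.ext
  have := congrArg Fin.val h
  simpa [gr_val] using this

def G {n : ℕ} : Fin n × Fin n → Fin (n + 2) × Fin (n + 2) := Prod.map gr gr

lemma G_inj {n : ℕ} : Function.Injective (G (n := n)) :=
  Function.Injective.prodMap gr_inj gr_inj

lemma gr_rev {n : ℕ} (i : Fin n) : gr i.rev = (gr i).rev := by
  apply Fin.ext
  have h1 := i.isLt
  simp [gr_val, Fin.val_rev]
  omega

lemma gr_ne_zero {n : ℕ} (i : Fin n) : gr i ≠ 0 := by
  intro h
  have := congrArg Fin.val h
  simp [gr_val] at this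

lemma gr_ne_last {n : ℕ} (i : Fin n) : gr i ≠ Fin.last (n + 1) := by
  intro h
  have := congrArg Fin.val h
  have := i.isLt
  simp [gr_val, Fin.last] at *
  omega

lemma G_card {n : ℕ} (M' : Finset (Fin n × Fin n)) :
    (M'.image G).card = M'.card := card_image_of_injective _ G_inj

lemma G_matching_iff {n : ℕ} (M' : Finset (Fin n × Fin n)) :
    IsMatching (n + 2) (M'.image G) ↔ IsMatching n M' := by
  constructor
  · rintro ⟨hgap, hdisj⟩
    constructor
    · intro p hp
      have := hgap (G p) (mem_image_of_mem _ hp)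
      simpa [G, gr_val] using this
    · intro p hp q hq hne
      have := hdisj (G p) (mem_image_of_mem _ hp) (G q) (mem_image_of_mem _ hq)
        (fun h => hne (G_inj h))
      refine ⟨fun h => this.1 ?_, fun h => this.2.1 ?_, fun h => this.2.2.1 ?_,
        fun h => this.2.2.2 ?_⟩ <;> simp [G, h]
  · rintro ⟨hgap, hdisj⟩
    constructor
    · intro p hp
      obtain ⟨q, hq, rfl⟩ := mem_image.mp hp
      have := hgap q hq
      simpa [G, gr_val] using this
    · intro p hp q hq hne
      obtain ⟨p', hp', rfl⟩ := mem_image.mp hp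
      obtain ⟨q', hq', rfl⟩ := mem_image.mp hq
      have hne' : p' ≠ q' := fun h => hne (by rw [h])
      have := hdisj p' hp' q' hq' hne'
      exact ⟨fun h => this.1 (gr_inj h), fun h => this.2.1 (gr_inj h),
        fun h => this.2.2.1 (gr_inj h), fun h => this.2.2.2 (gr_inj h)⟩

lemma G_rev {n : ℕ} (p : Fin n × Fin n) :
    ((G p).2.rev, (G p).1.rev) = G (p.2.rev, p.1.rev) := by
  simp [G, gr_rev]

lemma G_symm_iff {n : ℕ} (M' : Finset (Fin n × Fin n)) :
    SymmMatching (n + 2) (M'.image G) ↔ SymmMatching n M' := by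
  constructor
  · intro hs p hp
    have := hs (G p) (mem_image_of_mem _ hp)
    rw [G_rev] at this
    obtain ⟨q, hq, hq2⟩ := mem_image.mp this
    rwa [← G_inj hq2]
  · intro hs p hp
    obtain ⟨q, hq, rfl⟩ := mem_image.mp hp
    rw [G_rev]
    exact mem_image_of_mem _ (hs q hq)

lemma G_free_zero {n : ℕ} (M' : Finset (Fin n × Fin n)) :
    Free (M'.image G) 0 := by
  intro p hp
  obtain ⟨q, hq, rfl⟩ := mem_image.mp hp
  exact ⟨fun h => gr_ne_zero q.1 h.symm, fun h => gr_ne_zero q.2 h.symm⟩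

lemma G_free_last {n : ℕ} (M' : Finset (Fin n × Fin n)) :
    Free (M'.image G) (Fin.last (n + 1)) := by
  intro p hp
  obtain ⟨q, hq, rfl⟩ := mem_image.mp hp
  exact ⟨fun h => gr_ne_last q.1 h.symm, fun h => gr_ne_last q.2 h.symm⟩

lemma G_free_iff {n : ℕ} (M' : Finset (Fin n × Fin n)) (x : Fin n) :
    Free (M'.image G) (gr x) ↔ Free M' x := by
  constructor
  · intro h p hp
    have := h (G p) (mem_image_of_mem _ hp)
    exact ⟨fun he => this.1 (by simp [G, he]), fun he => this.2 (by simp [G, he])⟩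
  · intro h p hp
    obtain ⟨q, hq, rfl⟩ := mem_image.mp hp
    have := h q hq
    exact ⟨fun he => this.1 (gr_inj he), fun he => this.2 (gr_inj he)⟩

lemma G_surj {n : ℕ} (M : Finset (Fin (n + 2) × Fin (n + 2)))
    (h0 : Free M 0) (hl : Free M (Fin.last (n + 1))) :
    ∃ M' : Finset (Fin n × Fin n), M'.image G = M := by
  have hb : ∀ p ∈ M, (p.1.val - 1 < n ∧ 1 ≤ p.1.val) ∧ (p.2.val - 1 < n ∧ 1 ≤ p.2.val) := by
    intro p hp
    have h1 := h0 p hp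
    have h2 := hl p hp
    have e1 : p.1.val ≠ 0 := fun h => h1.1 (Fin.ext (by simp [h])).symm
    have e2 : p.2.val ≠ 0 := fun h => h1.2 (Fin.ext (by simp [h])).symm
    have e3 : p.1.val ≠ n + 1 := fun h => h2.1 (Fin.ext (by simp [Fin.last, h])).symm
    have e4 : p.2.val ≠ n + 1 := fun h => h2.2 (Fin.ext (by simp [Fin.last, h])).symm
    have := p.1.isLt
    have := p.2.isLt
    omega
  refine ⟨M.attach.image (fun q =>
    (⟨q.1.1.val - 1, ((hb q.1 q.2).1).1⟩, ⟨q.1.2.val - 1, ((hb q.1 q.2).2).1⟩)), ?_⟩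
  rw [image_image]
  have : ∀ q ∈ M.attach, (G ∘ fun q =>
      ((⟨q.1.1.val - 1, ((hb q.1 q.2).1).1⟩ : Fin n), (⟨q.1.2.val - 1, ((hb q.1 q.2).2).1⟩ : Fin n))) q
      = q.1 := by
    rintro ⟨p, hp⟩ _
    have := hb p hp
    apply Prod.ext <;> apply Fin.ext <;> simp [G, gr_val] <;> omega
  rw [image_congr this, attach_image_val]
lemma matching_mono {n : ℕ} {M₀ M : Finset (Fin n × Fin n)} (h : M₀ ⊆ M)
    (hm : IsMatching n M) : IsMatching n M₀ :=
  ⟨fun p hp => hm.1 p (h hp), fun p hp q hq hne => hm.2 p (h hp) q (h hq) hne⟩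

lemma free_mono {n : ℕ} {M₀ M : Finset (Fin n × Fin n)} (h : M₀ ⊆ M) {x : Fin n}
    (hx : Free M x) : Free M₀ x := fun p hp => hx p (h hp)

lemma free_insert {n : ℕ} {M : Finset (Fin n × Fin n)} {x : Fin n} {p : Fin n × Fin n}
    (hx : Free M x) (h1 : x ≠ p.1) (h2 : x ≠ p.2) : Free (insert p M) x := by
  intro q hq
  rcases mem_insert.mp hq with rfl | hq
  · exact ⟨h1, h2⟩
  · exact hx q hq

lemma matching_insert {n : ℕ} {M : Finset (Fin n × Fin n)} {p : Fin n × Fin n}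
    (hm : IsMatching n M) (hgap : p.1.val + 2 ≤ p.2.val)
    (h1 : Free M p.1) (h2 : Free M p.2) : IsMatching n (insert p M) := by
  constructor
  · intro q hq
    rcases mem_insert.mp hq with rfl | hq
    · exact hgap
    · exact hm.1 q hq
  · intro q hq r hr hne
    rcases mem_insert.mp hq with hq1 | hq1
    · rcases mem_insert.mp hr with hr1 | hr1
      · exact absurd (hq1.trans hr1.symm) hne
      · subst hq1
        exact ⟨(h1 r hr1).1, (h1 r hr1).2, (h2 r hr1).1, (h2 r hr1).2⟩
    · rcases mem_insert.mp hr with hr1 | hr1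
      · subst hr1
        exact ⟨fun h => (h1 q hq1).1 h.symm, fun h => (h2 q hq1).1 h.symm,
          fun h => (h1 q hq1).2 h.symm, fun h => (h2 q hq1).2 h.symm⟩
      · exact hm.2 q hq1 r hr1 hne

lemma rev_rev {n : ℕ} (p : Fin n × Fin n) :
    (((p.2.rev, p.1.rev) : Fin n × Fin n).2.rev,
      ((p.2.rev, p.1.rev) : Fin n × Fin n).1.rev) = p := by
  simp [Fin.rev_rev]

lemma symm_erase {n : ℕ} {M : Finset (Fin n × Fin n)} (hs : SymmMatching n M)
    {a : Fin n × Fin n} (ha : (a.2.rev, a.1.rev) = a) :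
    SymmMatching n (M.erase a) := by
  intro p hp
  obtain ⟨hpa, hpM⟩ := mem_erase.mp hp
  refine mem_erase.mpr ⟨?_, hs p hpM⟩
  intro h
  apply hpa
  have := congrArg (fun q : Fin n × Fin n => ((q.2.rev, q.1.rev) : Fin n × Fin n)) h
  simpa [rev_rev, ha] using this

/-- Bijection: matchings on n+2 points with 0 (and by symmetry, last) free
    correspond to matchings on n points. -/
lemma A_card (n k : ℕ) :
    ((F (n + 2) (k + 2)).filter (fun M => Free M 0)).card = (F n k).card := by
  symm
  apply card_bij (fun M' _ => M'.image G)
  · intro M' hM'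
    obtain ⟨hm, hs, hc⟩ := mem_F.mp hM'
    refine mem_filter.mpr ⟨mem_F.mpr ⟨(G_matching_iff M').mpr hm, (G_symm_iff M').mpr hs, ?_⟩,
      G_free_zero M'⟩
    rw [G_card]; omega
  · intro M₁ h₁ M₂ h₂ h
    exact Finset.image_injective G_inj h
  · intro M hM
    obtain ⟨hMF, h0⟩ := mem_filter.mp hM
    obtain ⟨hm, hs, hc⟩ := mem_F.mp hMF
    have hl : Free M (Fin.last (n + 1)) := by
      have := free_rev hs h0
      rwa [Fin.rev_zero] at this
    obtain ⟨M', hM'⟩ := G_surj M h0 hl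
    refine ⟨M', mem_F.mpr ⟨?_, ?_, ?_⟩, hM'⟩
    · rw [← G_matching_iff, hM']; exact hm
    · rw [← G_symm_iff, hM']; exact hs
    · have := G_card M'
      rw [hM'] at this
      omega

/-- Bijection: matchings on n+2 points containing the outer arc (0, last)
    correspond to matchings on n points. -/
lemma B_card (n k : ℕ) (hn : 0 < n) :
    ((F (n + 2) k).filter (fun M => ((0 : Fin (n + 2)), Fin.last (n + 1)) ∈ M)).card
      = (F n k).card := by
  symm
  set a : Fin (n + 2) × Fin (n + 2) := ((0 : Fin (n + 2)), Fin.last (n + 1)) with ha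
  have hrev : ((a.2.rev, a.1.rev) : Fin (n + 2) × Fin (n + 2)) = a := by
    simp [ha, Fin.rev_last, Fin.rev_zero]
  have hagap : a.1.val + 2 ≤ a.2.val := by
    simp [ha, Fin.last]; omega
  apply card_bij (fun M' _ => insert a (M'.image G))
  · intro M' hM'
    obtain ⟨hm, hs, hc⟩ := mem_F.mp hM'
    have hfz := G_free_zero M'
    have hfl := G_free_last M'
    have hanm : a ∉ M'.image G := fun h => (hfz a h).1 rfl
    refine mem_filter.mpr ⟨mem_F.mpr ⟨?_, ?_, ?_⟩, mem_insert_self a _⟩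
    · exact matching_insert ((G_matching_iff M').mpr hm) hagap hfz hfl
    · intro p hp
      rcases mem_insert.mp hp with rfl | hp
      · rw [hrev]; exact mem_insert_self _ _
      · obtain ⟨q, hq, rfl⟩ := mem_image.mp hp
        rw [G_rev]
        exact mem_insert_of_mem (mem_image_of_mem _ (hs q hq))
    · rw [card_insert_of_notMem hanm, G_card]; omega
  · intro M₁ h₁ M₂ h₂ h
    have hn1 : a ∉ M₁.image G := fun hh => (G_free_zero M₁ a hh).1 rfl
    have hn2 : a ∉ M₂.image G := fun hh => (G_free_zero M₂ a hh).1 rfl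
    have := congrArg (fun s => s.erase a) h
    simp only [erase_insert hn1, erase_insert hn2] at this
    exact Finset.image_injective G_inj this
  · intro M hM
    obtain ⟨hMF, haM⟩ := mem_filter.mp hM
    obtain ⟨hm, hs, hc⟩ := mem_F.mp hMF
    set M₀ := M.erase a with hM₀
    have hsub : M₀ ⊆ M := erase_subset _ _
    have hfree0 : Free M₀ 0 := by
      intro p hp
      obtain ⟨hpa, hpM⟩ := mem_erase.mp hp
      constructor
      · intro h
        exact (hm.2 p hpM a haM hpa).1 (by rw [← h])
      · intro h
        have := hm.1 p hpM
        rw [← h] at this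
        simp at this
    have hfreel : Free M₀ (Fin.last (n + 1)) := by
      intro p hp
      obtain ⟨hpa, hpM⟩ := mem_erase.mp hp
      constructor
      · intro h
        have := hm.1 p hpM
        have h2 := p.2.isLt
        rw [← h] at this
        simp [Fin.last] at this
        omega
      · intro h
        exact (hm.2 p hpM a haM hpa).2.2.2 (by rw [← h])
    obtain ⟨M', hM'⟩ := G_surj M₀ hfree0 hfreel
    have hcard₀ : M₀.card + 1 = M.card := by
      rw [hM₀, card_erase_of_mem haM]
      have : 0 < M.card := card_pos.mpr ⟨a, haM⟩
      omega
    refine ⟨M', mem_F.mpr ⟨?_, ?_, ?_⟩, ?_⟩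
    · rw [← G_matching_iff, hM']; exact matching_mono hsub hm
    · rw [← G_symm_iff, hM']; exact symm_erase hs hrev
    · have := G_card M'
      rw [hM'] at this
      omega
    · rw [hM', hM₀, insert_erase haM]

/-- Bijection: matchings on n+4 points containing the arc (0, gr f) with f ≠ 0
    correspond to matchings on n+2 points where f is free. -/
lemma C_card (n k : ℕ) (hn : Even n) (f : Fin (n + 2)) (hf : f ≠ 0) :
    ((F (n + 2 + 2) k).filter (fun M => ((0 : Fin (n + 2 + 2)), gr f) ∈ M)).card
      = ((F (n + 2) (k + 2)).filter (fun M' => Free M' f)).card := by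
  symm
  set a : Fin (n + 2 + 2) × Fin (n + 2 + 2) := ((0 : Fin (n + 2 + 2)), gr f) with ha
  set b : Fin (n + 2 + 2) × Fin (n + 2 + 2) := ((gr f).rev, Fin.last (n + 2 + 1)) with hb
  have hfv1 : 1 ≤ f.val := by
    rcases Nat.eq_zero_or_pos f.val with h | h
    · exact absurd (Fin.ext (by simp [h])) hf
    · exact h
  have hfvl : f.val < n + 2 := f.isLt
  have hgfv : (gr f).val = f.val + 1 := rfl
  have hrevv : ((gr f).rev).val = n + 2 - f.val := by
    rw [Fin.val_rev, hgfv]; omega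
  have hne_gf : gr f ≠ (gr f).rev := by
    intro h
    have := congrArg Fin.val h
    rw [hgfv, hrevv] at this
    obtain ⟨t, rfl⟩ := hn
    omega
  have hb_rev : ((a.2.rev, a.1.rev) : Fin (n + 2 + 2) × Fin (n + 2 + 2)) = b := by
    simp [ha, hb, Fin.rev_zero]
  have ha_rev : ((b.2.rev, b.1.rev) : Fin (n + 2 + 2) × Fin (n + 2 + 2)) = a := by
    simp [ha, hb, Fin.rev_last, Fin.rev_rev]
  have hab : a ≠ b := by
    intro h
    have := congrArg (fun p : Fin (n + 2 + 2) × Fin (n + 2 + 2) => p.1.val) h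
    simp [ha, hb, hrevv] at this
    omega
  have h0b1 : (0 : Fin (n + 2 + 2)) ≠ b.1 := by
    intro h
    have := congrArg Fin.val h
    simp [hb, hrevv] at this
    omega
  have h0b2 : (0 : Fin (n + 2 + 2)) ≠ b.2 := by
    intro h
    have := congrArg Fin.val h
    simp [hb, Fin.last] at this
  have hgf_rev : (gr f).rev = gr f.rev := (gr_rev f).symm
  have hgap_a : a.1.val + 2 ≤ a.2.val := by
    show (0 : Fin (n + 2 + 2)).val + 2 ≤ (gr f).val
    rw [hgfv]; simp; omega
  have hgap_b : b.1.val + 2 ≤ b.2.val := by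
    show ((gr f).rev).val + 2 ≤ (Fin.last (n + 2 + 1)).val
    rw [hrevv]; simp [Fin.last]; omega
  apply card_bij (fun M' _ => insert a (insert b (M'.image G)))
  · intro M' hM'
    obtain ⟨hMF, hff⟩ := mem_filter.mp hM'
    obtain ⟨hm, hs, hc⟩ := mem_F.mp hMF
    have hfr : Free M' f.rev := free_rev hs hff
    have hGf : Free (M'.image G) (gr f) := (G_free_iff M' f).mpr hff
    have hGfr : Free (M'.image G) ((gr f).rev) := by
      rw [hgf_rev]; exact (G_free_iff M' f.rev).mpr hfr
    have hG0 := G_free_zero M'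
    have hGl := G_free_last M'
    have hbnm : b ∉ M'.image G := fun h => (hGl b h).2 rfl
    have hanm : a ∉ insert b (M'.image G) := by
      intro h
      rcases mem_insert.mp h with h | h
      · exact hab h
      · exact (hG0 a h).1 rfl
    refine mem_filter.mpr ⟨mem_F.mpr ⟨?_, ?_, ?_⟩, mem_insert_self a _⟩
    · have step1 : IsMatching (n + 2 + 2) (insert b (M'.image G)) :=
        matching_insert ((G_matching_iff M').mpr hm) hgap_b hGfr hGl
      exact matching_insert step1 hgap_a
        (free_insert hG0 h0b1 h0b2)
        (free_insert hGf hne_gf (gr_ne_last f))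
    · intro p hp
      rcases mem_insert.mp hp with rfl | hp
      · rw [hb_rev]
        exact mem_insert_of_mem (mem_insert_self b _)
      · rcases mem_insert.mp hp with rfl | hp
        · rw [ha_rev]
          exact mem_insert_self a _
        · obtain ⟨q, hq, rfl⟩ := mem_image.mp hp
          rw [G_rev]
          exact mem_insert_of_mem (mem_insert_of_mem (mem_image_of_mem _ (hs q hq)))
    · rw [card_insert_of_notMem hanm, card_insert_of_notMem hbnm, G_card]
      omega
  · intro M₁ h₁ M₂ h₂ h
    have hb1 : b ∉ M₁.image G := fun hh => (G_free_last M₁ b hh).2 rfl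
    have hb2 : b ∉ M₂.image G := fun hh => (G_free_last M₂ b hh).2 rfl
    have ha1 : a ∉ insert b (M₁.image G) := by
      intro hh
      rcases mem_insert.mp hh with hh | hh
      · exact hab hh
      · exact (G_free_zero M₁ a hh).1 rfl
    have ha2 : a ∉ insert b (M₂.image G) := by
      intro hh
      rcases mem_insert.mp hh with hh | hh
      · exact hab hh
      · exact (G_free_zero M₂ a hh).1 rfl
    have h' := congrArg (fun s => s.erase a) h
    simp only [erase_insert ha1, erase_insert ha2] at h'
    have h'' := congrArg (fun s => s.erase b) h'
    simp only [erase_insert hb1, erase_insert hb2] at h''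
    exact Finset.image_injective G_inj h''
  · intro M hM
    obtain ⟨hMF, haM⟩ := mem_filter.mp hM
    obtain ⟨hm, hs, hc⟩ := mem_F.mp hMF
    have hbM : b ∈ M := by
      have := hs a haM
      rwa [hb_rev] at this
    set M₀ : Finset (Fin (n + 2 + 2) × Fin (n + 2 + 2)) := (M.erase a).erase b with hM₀
    have hsub : M₀ ⊆ M := fun p hp => mem_of_mem_erase (mem_of_mem_erase hp)
    have hmem₀ : ∀ p, p ∈ M₀ → p ≠ a ∧ p ≠ b ∧ p ∈ M := by
      intro p hp
      obtain ⟨hpb, hp'⟩ := mem_erase.mp hp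
      obtain ⟨hpa, hpM⟩ := mem_erase.mp hp'
      exact ⟨hpa, hpb, hpM⟩
    have hfree0 : Free M₀ 0 := by
      intro p hp
      obtain ⟨hpa, hpb, hpM⟩ := hmem₀ p hp
      constructor
      · intro h
        exact (hm.2 p hpM a haM hpa).1 (by rw [← h])
      · intro h
        have := hm.1 p hpM
        rw [← h] at this
        simp at this
    have hfreel : Free M₀ (Fin.last (n + 2 + 1)) := by
      intro p hp
      obtain ⟨hpa, hpb, hpM⟩ := hmem₀ p hp
      constructor
      · intro h
        have := hm.1 p hpM
        have h2 := p.2.isLt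
        rw [← h] at this
        simp [Fin.last] at this
        omega
      · intro h
        exact (hm.2 p hpM b hbM hpb).2.2.2 (by rw [← h])
    have hfreegf : Free M₀ (gr f) := by
      intro p hp
      obtain ⟨hpa, hpb, hpM⟩ := hmem₀ p hp
      constructor
      · intro h
        exact (hm.2 p hpM a haM hpa).2.1 (by rw [← h])
      · intro h
        exact (hm.2 p hpM a haM hpa).2.2.2 (by rw [← h])
    obtain ⟨M', hM'⟩ := G_surj M₀ hfree0 hfreel
    have hbM' : b ∈ M.erase a := mem_erase.mpr ⟨Ne.symm hab, hbM⟩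
    have hcard₀ : M₀.card + 2 = M.card := by
      rw [hM₀, card_erase_of_mem hbM', card_erase_of_mem haM]
      have h1 : 0 < (M.erase a).card := card_pos.mpr ⟨b, hbM'⟩
      have h2 : 0 < M.card := card_pos.mpr ⟨a, haM⟩
      have h3 : (M.erase a).card + 1 = M.card := by
        rw [card_erase_of_mem haM]; omega
      omega
    refine ⟨M', mem_filter.mpr ⟨mem_F.mpr ⟨?_, ?_, ?_⟩, ?_⟩, ?_⟩
    · rw [← G_matching_iff, hM']
      exact matching_mono hsub hm
    · rw [← G_symm_iff, hM']
      intro p hp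
      obtain ⟨hpa, hpb, hpM⟩ := hmem₀ p hp
      have hrev : (p.2.rev, p.1.rev) ∈ M := hs p hpM
      refine mem_erase.mpr ⟨?_, mem_erase.mpr ⟨?_, hrev⟩⟩
      · intro h
        apply hpa
        have := congrArg (fun q : Fin (n + 2 + 2) × Fin (n + 2 + 2) =>
          ((q.2.rev, q.1.rev) : Fin (n + 2 + 2) × Fin (n + 2 + 2))) h
        simpa [rev_rev, ha_rev] using this
      · intro h
        apply hpb
        have := congrArg (fun q : Fin (n + 2 + 2) × Fin (n + 2 + 2) =>
          ((q.2.rev, q.1.rev) : Fin (n + 2 + 2) × Fin (n + 2 + 2))) h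
        simpa [rev_rev, hb_rev] using this
    · have := G_card M'
      rw [hM'] at this
      omega
    · rw [← G_free_iff, hM']
      exact hfreegf
    · rw [hM', hM₀, insert_erase hbM', insert_erase haM]

set_option maxHeartbeats 2000000 in
lemma main (m k : ℕ) (hm : Even m) (hk : Even k) :
    Q (m + 4) k + Q m k
      = (k + 2) * Q (m + 2) (k + 2) + Q (m + 2) k +
        (if k = 0 then 0 else Q (m + 2) (k - 2)) := by
  have e : m + 4 = m + 2 + 2 := by omega
  rw [e]
  simp only [Q_eq]
  set a₀ : Fin (m + 2 + 2) × Fin (m + 2 + 2) :=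
    ((0 : Fin (m + 2 + 2)), Fin.last (m + 2 + 1)) with ha₀
  -- split the big set into three classes
  have hsplit1 : ((F (m + 2 + 2) k).filter (fun M => Free M 0)).card
      + ((F (m + 2 + 2) k).filter (fun M => ¬ Free M 0)).card
      = (F (m + 2 + 2) k).card :=
    card_filter_add_card_filter_not _
  have hsplit2 : (((F (m + 2 + 2) k).filter (fun M => ¬ Free M 0)).filter
        (fun M => a₀ ∈ M)).card
      + (((F (m + 2 + 2) k).filter (fun M => ¬ Free M 0)).filter
        (fun M => ¬ a₀ ∈ M)).card
      = ((F (m + 2 + 2) k).filter (fun M => ¬ Free M 0)).card :=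
    card_filter_add_card_filter_not _
  -- class B
  have hBeq : ((F (m + 2 + 2) k).filter (fun M => ¬ Free M 0)).filter (fun M => a₀ ∈ M)
      = (F (m + 2 + 2) k).filter (fun M => a₀ ∈ M) := by
    rw [filter_filter]
    apply filter_congr
    intro M hM
    constructor
    · exact fun h => h.2
    · exact fun h => ⟨fun hf => (hf _ h).1 rfl, h⟩
  have hB : (((F (m + 2 + 2) k).filter (fun M => ¬ Free M 0)).filter
      (fun M => a₀ ∈ M)).card = (F (m + 2) k).card := by
    rw [hBeq]
    exact B_card (m + 2) k (by omega)
  -- class A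
  have hA : ((F (m + 2 + 2) k).filter (fun M => Free M 0)).card
      = (if k = 0 then 0 else (F (m + 2) (k - 2)).card) := by
    split_ifs with hk0
    · subst hk0
      rw [card_eq_zero, filter_eq_empty_iff]
      intro M hMF hfree
      have hcf := card_free hMF
      have h0 : (0 : Fin (m + 2 + 2)) ∈ univ.filter (fun x => Free M x) :=
        mem_filter.mpr ⟨mem_univ _, hfree⟩
      have := card_pos.mpr ⟨_, h0⟩
      omega
    · have hk2 : 2 ≤ k := by
        rcases hk with ⟨t, rfl⟩
        omega
      have hkk : k - 2 + 2 = k := by omega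
      rw [← hkk]
      exact A_card (m + 2) (k - 2)
  -- class C as a disjoint union over the partner of 0
  have hCeq : ((F (m + 2 + 2) k).filter (fun M => ¬ Free M 0)).filter (fun M => ¬ a₀ ∈ M)
      = (univ.erase (0 : Fin (m + 2))).biUnion
        (fun f => (F (m + 2 + 2) k).filter
          (fun M => ((0 : Fin (m + 2 + 2)), gr f) ∈ M)) := by
    ext M
    simp only [mem_biUnion, mem_erase, mem_univ, and_true, mem_filter]
    constructor
    · rintro ⟨⟨hMF, hnf⟩, hna⟩
      obtain ⟨hmm, hss, hcc⟩ := mem_F.mp hMF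
      have : ∃ p ∈ M, ¬ ((0 : Fin (m + 2 + 2)) ≠ p.1 ∧ (0 : Fin (m + 2 + 2)) ≠ p.2) := by
        by_contra hcon
        push_neg at hcon
        exact hnf (fun p hp => hcon p hp)
      obtain ⟨p, hp, hp0⟩ := this
      have hp2 : (0 : Fin (m + 2 + 2)) ≠ p.2 := by
        intro h
        have := hmm.1 p hp
        rw [← h] at this
        simp at this
      have hp1 : p.1 = 0 := by
        rcases not_and_or.mp hp0 with h | h
        · exact (not_not.mp h).symm
        · exact absurd (not_not.mp h) hp2
      have hgapp := hmm.1 p hp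
      rw [hp1] at hgapp
      simp at hgapp
      have hlt := p.2.isLt
      have hplast : p.2 ≠ Fin.last (m + 2 + 1) := by
        intro h
        apply hna
        have : p = a₀ := Prod.ext hp1 h
        rwa [this] at hp
      have hvlast : p.2.val ≠ m + 3 := by
        intro h
        exact hplast (Fin.ext (by simp [Fin.last]; omega))
      refine ⟨⟨p.2.val - 1, by omega⟩, ?_, hMF, ?_⟩
      · intro h
        have := congrArg Fin.val h
        simp at this
        omega
      · have : ((0 : Fin (m + 2 + 2)), gr (⟨p.2.val - 1, by omega⟩ : Fin (m + 2))) = p := by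
          refine Prod.ext hp1.symm ?_
          apply Fin.ext
          simp [gr_val]
          omega
        rwa [this]
    · rintro ⟨f, hf0, hMF, hfM⟩
      obtain ⟨hmm, hss, hcc⟩ := mem_F.mp hMF
      refine ⟨⟨hMF, ?_⟩, ?_⟩
      · intro hfree
        exact (hfree _ hfM).1 rfl
      · intro hna
        have hne : ((0 : Fin (m + 2 + 2)), gr f) ≠ a₀ := by
          intro h
          exact gr_ne_last f (congrArg Prod.snd h)
        exact (hmm.2 _ hfM a₀ hna hne).1 rfl
  have hC : (((F (m + 2 + 2) k).filter (fun M => ¬ Free M 0)).filter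
        (fun M => ¬ a₀ ∈ M)).card
      = ∑ f ∈ univ.erase (0 : Fin (m + 2)),
          ((F (m + 2) (k + 2)).filter (fun M' => Free M' f)).card := by
    rw [hCeq, card_biUnion]
    · apply Finset.sum_congr rfl
      intro f hf
      exact C_card m k hm f (mem_erase.mp hf).1
    · intro f₁ h₁ f₂ h₂ hne
      rw [Function.onFun, disjoint_left]
      intro M hM₁ hM₂
      obtain ⟨hMF, hm₁⟩ := mem_filter.mp hM₁
      obtain ⟨_, hm₂⟩ := mem_filter.mp hM₂
      obtain ⟨hmm, _, _⟩ := mem_F.mp hMF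
      have hpne : ((0 : Fin (m + 2 + 2)), gr f₁) ≠ ((0 : Fin (m + 2 + 2)), gr f₂) := by
        intro h
        exact hne (gr_inj (congrArg Prod.snd h))
      exact (hmm.2 _ hm₁ _ hm₂ hpne).1 rfl
  -- total sum over all f
  have hsum_all : ∑ f : Fin (m + 2),
        ((F (m + 2) (k + 2)).filter (fun M' => Free M' f)).card
      = (k + 2) * (F (m + 2) (k + 2)).card := by
    have step : ∀ M ∈ F (m + 2) (k + 2),
        (∑ f : Fin (m + 2), if Free M f then 1 else 0) = k + 2 := by
      intro M hM
      rw [← Finset.card_filter]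
      exact card_free hM
    calc ∑ f : Fin (m + 2), ((F (m + 2) (k + 2)).filter (fun M' => Free M' f)).card
        = ∑ f : Fin (m + 2), ∑ M ∈ F (m + 2) (k + 2), (if Free M f then 1 else 0) :=
          Finset.sum_congr rfl (fun f _ => Finset.card_filter _ _)
      _ = ∑ M ∈ F (m + 2) (k + 2), ∑ f : Fin (m + 2), (if Free M f then 1 else 0) :=
          Finset.sum_comm
      _ = ∑ _M ∈ F (m + 2) (k + 2), (k + 2) := Finset.sum_congr rfl step
      _ = (k + 2) * (F (m + 2) (k + 2)).card := by
          rw [Finset.sum_const, smul_eq_mul, mul_comm]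
  have hsum_split : ((F (m + 2) (k + 2)).filter (fun M' => Free M' (0 : Fin (m + 2)))).card
        + ∑ f ∈ univ.erase (0 : Fin (m + 2)),
          ((F (m + 2) (k + 2)).filter (fun M' => Free M' f)).card
      = ∑ f : Fin (m + 2), ((F (m + 2) (k + 2)).filter (fun M' => Free M' f)).card :=
    Finset.add_sum_erase univ
      (fun f => ((F (m + 2) (k + 2)).filter (fun M' => Free M' f)).card) (mem_univ 0)
  have hA0 : ((F (m + 2) (k + 2)).filter (fun M' => Free M' (0 : Fin (m + 2)))).card
      = (F m k).card := A_card m k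
  -- abstract all cardinalities into variables and finish with linear arithmetic
  generalize h1 : ((F (m + 2 + 2) k).filter (fun M => Free M 0)).card = x1 at hsplit1 hA
  generalize h2 : ((F (m + 2 + 2) k).filter (fun M => ¬ Free M 0)).card = x2
    at hsplit1 hsplit2
  generalize h3 : (((F (m + 2 + 2) k).filter (fun M => ¬ Free M 0)).filter
    (fun M => a₀ ∈ M)).card = x3 at hsplit2 hB
  generalize h4 : (((F (m + 2 + 2) k).filter (fun M => ¬ Free M 0)).filter
    (fun M => ¬ a₀ ∈ M)).card = x4 at hsplit2 hC
  generalize h5 : (F (m + 2 + 2) k).card = x5 at hsplit1 ⊢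
  generalize h6 : (F (m + 2) k).card = x6 at hB ⊢
  generalize h7 : (F (m + 2) (k - 2)).card = x7 at hA ⊢
  generalize h8 : (∑ f ∈ univ.erase (0 : Fin (m + 2)),
    ((F (m + 2) (k + 2)).filter (fun M' => Free M' f)).card) = x8 at hC hsum_split
  generalize h9 : (∑ f : Fin (m + 2),
    ((F (m + 2) (k + 2)).filter (fun M' => Free M' f)).card) = x9 at hsum_all hsum_split
  generalize h11 : ((F (m + 2) (k + 2)).filter
    (fun M' => Free M' (0 : Fin (m + 2)))).card = x11 at hsum_split hA0
  generalize h12 : (F m k).card = x12 at hA0 ⊢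
  generalize h10 : (F (m + 2) (k + 2)).card = x10 at hsum_all ⊢
  generalize hp : (k + 2) * x10 = P at hsum_all ⊢
  split_ifs at hA ⊢ with hk0 <;> omega

end St8

/-- `Q (2n,k) = (k+2)·Q (2n-2,k+2) + Q (2n-2,k) + Q (2n-2,k-2)
- Q (2n-4,k)` for `n ≥ 3` and `k` even, with `Q (2n,k) = 0` for `k < 0` (hence
the `if k = 0` guard, as `k` ranges over ℕ), stated additively to avoid
truncated natural subtraction. -/
theorem statement8 :
    Q 2 0 = 0 ∧ Q 2 2 = 1 ∧ Q 4 0 = 1 ∧ Q 4 2 = 1 ∧ Q 4 4 = 1 ∧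
    ∀ n, 3 ≤ n → ∀ k : ℕ, Even k →
      Q (2 * n) k + Q (2 * n - 4) k =
        (k + 2) * Q (2 * n - 2) (k + 2) + Q (2 * n - 2) k +
          (if k = 0 then 0 else Q (2 * n - 2) (k - 2)) := by
  have q00 : Q 0 0 = 1 := by unfold Q; rw [Nat.card_eq_fintype_card]; decide
  have q02 : Q 0 2 = 0 := by unfold Q; rw [Nat.card_eq_fintype_card]; decide
  have q04 : Q 0 4 = 0 := by unfold Q; rw [Nat.card_eq_fintype_card]; decide
  have q20 : Q 2 0 = 0 := by unfold Q; rw [Nat.card_eq_fintype_card]; decide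
  have q22 : Q 2 2 = 1 := by unfold Q; rw [Nat.card_eq_fintype_card]; decide
  have q24 : Q 2 4 = 0 := by unfold Q; rw [Nat.card_eq_fintype_card]; decide
  have q26 : Q 2 6 = 0 := by unfold Q; rw [Nat.card_eq_fintype_card]; decide
  have h40 := St8.main 0 0 (⟨0, rfl⟩ : Even 0) (⟨0, rfl⟩ : Even 0)
  have h42 := St8.main 0 2 (⟨0, rfl⟩ : Even 0) (by decide)
  have h44 := St8.main 0 4 (⟨0, rfl⟩ : Even 0) (by decide)
  norm_num at h40 h42 h44
  refine ⟨q20, q22, by omega, by omega, by omega, ?_⟩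
  intro n hn k hk
  have hmain := St8.main (2 * (n - 2)) k ⟨n - 2, by ring⟩ hk
  have e1 : 2 * (n - 2) + 4 = 2 * n := by omega
  have e2 : 2 * (n - 2) + 2 = 2 * n - 2 := by omega
  have e3 : 2 * (n - 2) = 2 * n - 4 := by omega
  rw [e1, e2, e3] at hmain
  exact hmain
end

section
/- With Q (2n,k) as above, the sequence a n := Q (2(n+1), 2(n-1)) satisfies a 1 = 1 and a n = a (n-1) + 3n - 2 for n ≥ 2; hence a n = n(3n-1)/2, the n-th pentagonal number. -/
/-- `a n = Q (2(n+1), 2(n-1))`. -/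
noncomputable def a (n : ℕ) : ℕ := Q (2 * (n + 1)) (2 * (n - 1))

open Finset

def rv {m : ℕ} (p : Fin m × Fin m) : Fin m × Fin m := (p.2.rev, p.1.rev)

lemma rv_rv {m : ℕ} (p : Fin m × Fin m) : rv (rv p) = p := by
  simp [rv]

lemma rv1 {n : ℕ} (i : Fin (2*(n+1))) : (i.rev : ℕ) = 2*n+1 - i.val := by
  rw [Fin.val_rev]; omega

def D1 (n : ℕ) : Finset (Fin (2*(n+1)) × Fin (2*(n+1))) :=
  univ.filter (fun p => p.1.val + 2 ≤ p.2.val ∧ p.1.val + p.2.val ≤ 2*n)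

def D2 (n : ℕ) : Finset (Fin (2*(n+1)) × Fin (2*(n+1))) :=
  univ.filter (fun p => p.1.val < p.2.val ∧ p.2.val < n)

def f1 {m : ℕ} (p : Fin m × Fin m) : Finset (Fin m × Fin m) := {p, rv p}

def f2 {m : ℕ} (p : Fin m × Fin m) : Finset (Fin m × Fin m) :=
  {(p.1, p.1.rev), (p.2, p.2.rev)}

lemma sum_odds (n : ℕ) : ∑ j ∈ range n, (2*j+1) = n*n := by
  induction n with
  | zero => simp
  | succ k ih => rw [Finset.sum_range_succ, ih]; ring

lemma cardD1 (n : ℕ) : (D1 n).card = n * n := by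
  have h := Finset.card_nbij' (s := D1 n)
    (t := (range n).sigma (fun i => Finset.Ico (i+2) (2*n+1-i)))
    (fun p => ⟨p.1.val, p.2.val⟩)
    (fun x => (⟨x.1 % (2*(n+1)), Nat.mod_lt _ (by omega)⟩,
               ⟨x.2 % (2*(n+1)), Nat.mod_lt _ (by omega)⟩))
    (by rintro ⟨p1, p2⟩ hp
        simp only [Finset.mem_coe, D1, mem_filter, mem_univ, true_and] at hp
        simp only [Finset.mem_coe, Finset.mem_sigma, Finset.mem_range, Finset.mem_Ico]
        omega)
    (by rintro ⟨i, j⟩ hx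
        simp only [Finset.mem_coe, Finset.mem_sigma, Finset.mem_range, Finset.mem_Ico] at hx
        simp only [Finset.mem_coe, D1, mem_filter, mem_univ, true_and]
        constructor <;> simp only [Nat.mod_eq_of_lt (by omega : i < 2*(n+1)),
          Nat.mod_eq_of_lt (by omega : j < 2*(n+1))] <;> omega)
    (by rintro ⟨p1, p2⟩ hp
        have h1 := p1.isLt; have h2 := p2.isLt
        simp [Prod.ext_iff, Fin.ext_iff, Nat.mod_eq_of_lt h1, Nat.mod_eq_of_lt h2])
    (by rintro ⟨i, j⟩ hx
        simp only [Finset.mem_coe, Finset.mem_sigma, Finset.mem_range, Finset.mem_Ico] at hx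
        simp only [Nat.mod_eq_of_lt (by omega : i < 2*(n+1)),
          Nat.mod_eq_of_lt (by omega : j < 2*(n+1))])
  rw [h, Finset.card_sigma]
  have : ∀ i ∈ range n, (Finset.Ico (i+2) (2*n+1-i)).card = 2*n+1-i - (i+2) := by
    intro i _; rw [Nat.card_Ico]
  rw [Finset.sum_congr rfl this, ← Finset.sum_range_reflect]
  have h2 : ∀ j ∈ range n, 2*n+1-(n-1-j) - ((n-1-j)+2) = 2*j+1 := fun j hj => by
    rw [Finset.mem_range] at hj; omega
  rw [Finset.sum_congr rfl h2, sum_odds]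

lemma cardD2 (n : ℕ) : (D2 n).card = n * (n-1) / 2 := by
  have h := Finset.card_nbij' (s := D2 n)
    (t := (range n).sigma (fun j => range j))
    (fun p => ⟨p.2.val, p.1.val⟩)
    (fun x => (⟨x.2 % (2*(n+1)), Nat.mod_lt _ (by omega)⟩,
               ⟨x.1 % (2*(n+1)), Nat.mod_lt _ (by omega)⟩))
    (by rintro ⟨p1, p2⟩ hp
        simp only [Finset.mem_coe, D2, mem_filter, mem_univ, true_and] at hp
        simp only [Finset.mem_coe, Finset.mem_sigma, Finset.mem_range]
        omega)
    (by rintro ⟨j, i⟩ hx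
        simp only [Finset.mem_coe, Finset.mem_sigma, Finset.mem_range] at hx
        simp only [Finset.mem_coe, D2, mem_filter, mem_univ, true_and]
        constructor <;> simp only [Nat.mod_eq_of_lt (by omega : i < 2*(n+1)),
          Nat.mod_eq_of_lt (by omega : j < 2*(n+1))] <;> omega)
    (by rintro ⟨p1, p2⟩ hp
        have h1 := p1.isLt; have h2 := p2.isLt
        simp [Prod.ext_iff, Fin.ext_iff, Nat.mod_eq_of_lt h1, Nat.mod_eq_of_lt h2])
    (by rintro ⟨j, i⟩ hx
        simp only [Finset.mem_coe, Finset.mem_sigma, Finset.mem_range] at hx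
        simp only [Nat.mod_eq_of_lt (by omega : i < 2*(n+1)),
          Nat.mod_eq_of_lt (by omega : j < 2*(n+1))])
  rw [h, Finset.card_sigma]
  simp [Finset.sum_range_id]

lemma inj1 (n : ℕ) : Set.InjOn (f1 (m := 2*(n+1))) ↑(D1 n) := by
  intro p hp p' hp' h
  rw [Finset.mem_coe] at hp hp'
  simp only [D1, Finset.mem_filter, Finset.mem_univ, true_and] at hp hp'
  have hmem : p ∈ f1 p' := by rw [← h]; exact Finset.mem_insert_self _ _
  simp only [f1, Finset.mem_insert, Finset.mem_singleton] at hmem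
  rcases hmem with h1 | h1
  · exact h1
  · exfalso
    have e1 : p.1.val = 2*n+1 - p'.2.val := by rw [h1]; exact rv1 _
    have e2 : p.2.val = 2*n+1 - p'.1.val := by rw [h1]; exact rv1 _
    have i1 := p'.1.isLt; have i2 := p'.2.isLt
    omega

lemma inj2 (n : ℕ) : Set.InjOn (f2 (m := 2*(n+1))) ↑(D2 n) := by
  intro x hx y hy h
  rw [Finset.mem_coe] at hx hy
  simp only [D2, Finset.mem_filter, Finset.mem_univ, true_and] at hx hy
  have m1 : (x.1, x.1.rev) ∈ f2 y := by rw [← h]; exact Finset.mem_insert_self _ _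
  have m2 : (x.2, x.2.rev) ∈ f2 y := by
    rw [← h]; simp [f2]
  simp only [f2, Finset.mem_insert, Finset.mem_singleton, Prod.ext_iff] at m1 m2
  have hx1 : x.1.val = y.1.val ∨ x.1.val = y.2.val := by
    rcases m1 with ⟨h1, _⟩ | ⟨h1, _⟩
    exacts [Or.inl (congrArg Fin.val h1), Or.inr (congrArg Fin.val h1)]
  have hx2 : x.2.val = y.1.val ∨ x.2.val = y.2.val := by
    rcases m2 with ⟨h1, _⟩ | ⟨h1, _⟩
    exacts [Or.inl (congrArg Fin.val h1), Or.inr (congrArg Fin.val h1)]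
  have : x.1.val = y.1.val ∧ x.2.val = y.2.val := by omega
  exact Prod.ext_iff.mpr ⟨Fin.ext this.1, Fin.ext this.2⟩

lemma disj (n : ℕ) : Disjoint ((D1 n).image f1) ((D2 n).image f2) := by
  rw [Finset.disjoint_left]
  rintro M hM1 hM2
  obtain ⟨p, hp, rfl⟩ := Finset.mem_image.mp hM1
  obtain ⟨x, hx, hfx⟩ := Finset.mem_image.mp hM2
  have hpm : p ∈ f2 x := by rw [hfx]; exact Finset.mem_insert_self _ _
  simp only [D1, Finset.mem_filter, Finset.mem_univ, true_and] at hp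
  simp only [f2, Finset.mem_insert, Finset.mem_singleton] at hpm
  have i1 := x.1.isLt; have i2 := x.2.isLt
  rcases hpm with rfl | rfl
  · have := rv1 x.1; simp only [] at hp; omega
  · have := rv1 x.2; simp only [] at hp; omega

lemma main (n : ℕ) (hn : 1 ≤ n)
    [DecidablePred fun M : Finset (Fin (2*(n+1)) × Fin (2*(n+1))) =>
      IsMatching (2*(n+1)) M ∧ SymmMatching (2*(n+1)) M ∧ 2*(n+1) = 2*M.card + 2*(n-1)] :
    (univ.filter fun M : Finset (Fin (2*(n+1)) × Fin (2*(n+1))) =>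
      IsMatching (2*(n+1)) M ∧ SymmMatching (2*(n+1)) M ∧ 2*(n+1) = 2*M.card + 2*(n-1))
    = (D1 n).image f1 ∪ (D2 n).image f2 := by
  ext M
  simp only [Finset.mem_filter, Finset.mem_univ, true_and, Finset.mem_union,
    Finset.mem_image]
  constructor
  · rintro ⟨⟨harc, hdist⟩, hsym, hcard⟩
    have hc2 : M.card = 2 := by omega
    obtain ⟨p, q, hpq, rfl⟩ := Finset.card_eq_two.mp hc2
    have hp : p ∈ ({p, q} : Finset _) := Finset.mem_insert_self _ _
    have hq : q ∈ ({p, q} : Finset _) := by simp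
    have hsp : rv p = p ∨ rv p = q := by
      have := hsym p hp
      rwa [Finset.mem_insert, Finset.mem_singleton] at this
    have hsq : rv q = p ∨ rv q = q := by
      have := hsym q hq
      rwa [Finset.mem_insert, Finset.mem_singleton] at this
    have ip1 := p.1.isLt; have ip2 := p.2.isLt
    have iq1 := q.1.isLt; have iq2 := q.2.isLt
    by_cases hself : rv p = p
    · -- both arcs self-symmetric
      right
      have hqself : rv q = q := by
        rcases hsq with h | h
        · exfalso
          apply hpq
          have : q = rv p := by rw [← rv_rv q, h]
          rw [this, hself]
        · exact h
      have hpe : p = (p.1, p.1.rev) := by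
        rw [Prod.ext_iff]
        exact ⟨rfl, (congrArg Prod.snd hself).symm⟩
      have hqe : q = (q.1, q.1.rev) := by
        rw [Prod.ext_iff]
        exact ⟨rfl, (congrArg Prod.snd hqself).symm⟩
      have ep : p.2.val = 2*n+1 - p.1.val := by
        rw [← (congrArg Prod.snd hself : p.1.rev = p.2)]; exact rv1 _
      have eq' : q.2.val = 2*n+1 - q.1.val := by
        rw [← (congrArg Prod.snd hqself : q.1.rev = q.2)]; exact rv1 _
      have a1 : p.1.val + 2 ≤ p.2.val := harc p hp
      have a2 : q.1.val + 2 ≤ q.2.val := harc q hq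
      have hb1 : p.1.val < n := by omega
      have hb2 : q.1.val < n := by omega
      have hij : p.1.val ≠ q.1.val := by
        intro h
        apply hpq
        have h' : p.1 = q.1 := Fin.ext h
        rw [hpe, hqe, h']
      rcases Nat.lt_or_ge p.1.val q.1.val with hlt | hge
      · refine ⟨(p.1, q.1), ?_, ?_⟩
        · simp only [D2, Finset.mem_filter, Finset.mem_univ, true_and]
          exact ⟨hlt, hb2⟩
        · show ({(p.1, p.1.rev), (q.1, q.1.rev)} : Finset _) = {p, q}
          rw [← hpe, ← hqe]
      · have hlt : q.1.val < p.1.val := by omega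
        refine ⟨(q.1, p.1), ?_, ?_⟩
        · simp only [D2, Finset.mem_filter, Finset.mem_univ, true_and]
          exact ⟨hlt, hb1⟩
        · show ({(q.1, q.1.rev), (p.1, p.1.rev)} : Finset _) = {p, q}
          rw [← hpe, ← hqe, Finset.pair_comm]
    · -- mirror pair
      left
      have hq' : rv p = q := hsp.resolve_left hself
      have e1 : q.1.val = 2*n+1 - p.2.val := by
        rw [← (congrArg Prod.fst hq' : p.2.rev = q.1)]; exact rv1 _
      have e2 : q.2.val = 2*n+1 - p.1.val := by
        rw [← (congrArg Prod.snd hq' : p.1.rev = q.2)]; exact rv1 _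
      have a1 : p.1.val + 2 ≤ p.2.val := harc p hp
      have hne1 : p.1.val ≠ q.1.val := by
        intro h
        exact (hdist p hp q hq hpq).1 (Fin.ext h)
      by_cases hs : p.1.val + p.2.val ≤ 2*n
      · refine ⟨p, ?_, ?_⟩
        · simp only [D1, Finset.mem_filter, Finset.mem_univ, true_and]
          exact ⟨a1, hs⟩
        · show ({p, rv p} : Finset _) = {p, q}
          rw [hq']
      · refine ⟨q, ?_, ?_⟩
        · simp only [D1, Finset.mem_filter, Finset.mem_univ, true_and]
          constructor <;> omega
        · show ({q, rv q} : Finset _) = {p, q}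
          rw [← hq', rv_rv, Finset.pair_comm]
  · rintro (⟨p, hp, rfl⟩ | ⟨x, hx, rfl⟩)
    · simp only [D1, Finset.mem_filter, Finset.mem_univ, true_and] at hp
      obtain ⟨a1, a2⟩ := hp
      have ip1 := p.1.isLt; have ip2 := p.2.isLt
      have e1 : (rv p).1.val = 2*n+1 - p.2.val := rv1 p.2
      have e2 : (rv p).2.val = 2*n+1 - p.1.val := rv1 p.1
      have hne : p ≠ rv p := by
        intro h
        have h' := congrArg (fun z : Fin (2*(n+1)) × Fin (2*(n+1)) => z.1.val) h
        omega
      have hcard : (f1 p).card = 2 := Finset.card_pair hne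
      refine ⟨⟨?_, ?_⟩, ?_, by omega⟩
      · intro r hr
        simp only [f1, Finset.mem_insert, Finset.mem_singleton] at hr
        rcases hr with rfl | rfl
        · exact a1
        · omega
      · intro r hr s hs hrs
        simp only [f1, Finset.mem_insert, Finset.mem_singleton] at hr hs
        rcases hr with rfl | rfl <;> rcases hs with rfl | rfl
        · exact absurd rfl hrs
        · refine ⟨?_, ?_, ?_, ?_⟩ <;>
            · intro h; have h' := congrArg Fin.val h; omega
        · refine ⟨?_, ?_, ?_, ?_⟩ <;>
            · intro h; have h' := congrArg Fin.val h; omega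
        · exact absurd rfl hrs
      · intro r hr
        simp only [f1, Finset.mem_insert, Finset.mem_singleton] at hr
        rcases hr with rfl | rfl
        · show rv r ∈ f1 r
          simp [f1]
        · show rv (rv p) ∈ f1 p
          rw [rv_rv]
          simp [f1]
    · simp only [D2, Finset.mem_filter, Finset.mem_univ, true_and] at hx
      obtain ⟨a1, a2⟩ := hx
      have ix1 := x.1.isLt; have ix2 := x.2.isLt
      have e1 : (x.1.rev : ℕ) = 2*n+1 - x.1.val := rv1 x.1
      have e2 : (x.2.rev : ℕ) = 2*n+1 - x.2.val := rv1 x.2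
      have hne : (x.1, x.1.rev) ≠ (x.2, x.2.rev) := by
        intro h
        have h' := congrArg (fun z : Fin (2*(n+1)) × Fin (2*(n+1)) => z.1.val) h
        simp only [] at h'
        omega
      have hcard : (f2 x).card = 2 := Finset.card_pair hne
      refine ⟨⟨?_, ?_⟩, ?_, by omega⟩
      · intro r hr
        simp only [f2, Finset.mem_insert, Finset.mem_singleton] at hr
        rcases hr with rfl | rfl <;> · dsimp only; omega
      · intro r hr s hs hrs
        simp only [f2, Finset.mem_insert, Finset.mem_singleton] at hr hs
        rcases hr with rfl | rfl <;> rcases hs with rfl | rfl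
        · exact absurd rfl hrs
        · refine ⟨?_, ?_, ?_, ?_⟩ <;>
            · intro h; have h' := congrArg Fin.val h; dsimp only at h'; omega
        · refine ⟨?_, ?_, ?_, ?_⟩ <;>
            · intro h; have h' := congrArg Fin.val h; dsimp only at h'; omega
        · exact absurd rfl hrs
      · intro r hr
        simp only [f2, Finset.mem_insert, Finset.mem_singleton] at hr
        rcases hr with rfl | rfl
        · show (x.1.rev.rev, x.1.rev) ∈ f2 x
          rw [Fin.rev_rev]
          simp [f2]
        · show (x.2.rev.rev, x.2.rev) ∈ f2 x
          rw [Fin.rev_rev]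
          simp [f2]

lemma pent_arith (k : ℕ) : (k+1)*(k+1) + (k+1)*k/2 = (k+1)*(3*k+2)/2 := by
  obtain ⟨c, hc⟩ := Nat.even_mul_succ_self k
  have e1 : (k+1)*k = 2*c := by rw [mul_comm, hc]; ring
  have e2 : (k+1)*(3*k+2) = 2*((k+1)*(k+1) + c) := by
    have h : (k+1)*(3*k+2) = 2*((k+1)*(k+1)) + (k+1)*k := by ring
    rw [h, e1]; ring
  rw [e1, e2, Nat.mul_div_cancel_left _ (by norm_num : 0 < 2),
    Nat.mul_div_cancel_left _ (by norm_num : 0 < 2)]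

lemma key (n : ℕ) (hn : 1 ≤ n) : Q (2*(n+1)) (2*(n-1)) = n * (3*n-1) / 2 := by
  classical
  rw [Q, Nat.card_eq_fintype_card, Fintype.card_subtype, main n hn,
    Finset.card_union_of_disjoint (disj n),
    Finset.card_image_of_injOn (inj1 n), Finset.card_image_of_injOn (inj2 n),
    cardD1, cardD2]
  obtain ⟨k, rfl⟩ : ∃ k, n = k+1 := ⟨n-1, by omega⟩
  have h1 : (k+1) - 1 = k := by omega
  have h2 : 3*(k+1) - 1 = 3*k+2 := by omega
  rw [h1, h2]
  exact pent_arith k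

/-- `a 1 = 1`, `a n = a (n-1) + 3n - 2` for `n ≥ 2`, hence
`a n = n(3n-1)/2`, the `n`-th pentagonal number. -/
theorem statement10 :
    a 1 = 1 ∧ (∀ n, 2 ≤ n → a n = a (n - 1) + 3 * n - 2) ∧
    ∀ n, 1 ≤ n → a n = n * (3 * n - 1) / 2 := by
  have key' : ∀ n, 1 ≤ n → a n = n * (3 * n - 1) / 2 := fun n hn => key n hn
  refine ⟨?_, ?_, key'⟩
  · rw [key' 1 le_rfl]
  · intro n hn
    obtain ⟨k, rfl⟩ : ∃ k, n = k+2 := ⟨n-2, by omega⟩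
    have hs : k+2-1 = k+1 := by omega
    rw [key' (k+2) (by omega), hs, key' (k+1) (by omega)]
    have h2 : 3*(k+2)-1 = 3*k+5 := by omega
    have h3 : 3*(k+1)-1 = 3*k+2 := by omega
    rw [h2, h3]
    obtain ⟨c, hc⟩ := Nat.even_mul_succ_self k
    have e0 : (k+1)*(3*k+2) = 2*(c + (k+1)*(k+1)) := by
      have h : (k+1)*(3*k+2) = k*(k+1) + 2*((k+1)*(k+1)) := by ring
      rw [h, hc]; ring
    have e1 : (k+2)*(3*k+5) = 2*((c + (k+1)*(k+1)) + (3*k+4)) := by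
      have h : (k+2)*(3*k+5) = (k+1)*(3*k+2) + 2*(3*k+4) := by ring
      rw [h, e0]; ring
    rw [e0, e1, Nat.mul_div_cancel_left _ (by norm_num : 0 < 2),
      Nat.mul_div_cancel_left _ (by norm_num : 0 < 2)]
    omega
end
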